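/- arXiv:2507.08689 — 4 statements merged into one kernel-verified Lean document; each statement's English description precedes it below -/
import Mathlib

section
/- Let λ ≥ 0 and let κ : ℝ³ → ℝ satisfy κ₁⟨x⟩^{−λ} ≤ κ(x) ≤ κ₂⟨x⟩^{−λ} for all x ∈ ℝ³, with constants κ₁, κ₂ > 0. Let f : ℝ³×ℝ³ → [0,∞) be measurable with ∫_{ℝ⁶} f dx dv = ρ₀ > 0, ∫_{ℝ⁶} (|x|²+|v|²) f dx dv = c₂ < ∞, and ∫_{ℝ⁶} f log f dx dv ≤ h₀ < ∞. Define H(x,v) := ∫_{ℝ³} κ(x−y) f(y,v) dy. Then there exists a constant c_H > 0, depending only on ρ₀, c₂, h₀, κ₁ and λ, such that ∫_{ℝ³} H(x,v) dv ≥ c_H ⟨x⟩^{−λ} for every x ∈ ℝ³. -/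
open MeasureTheory Real

noncomputable section

abbrev E3 : Type := EuclideanSpace ℝ (Fin 3)

/-- `⟨x⟩ = √(1+|x|²)`. -/
def jap (x : E3) : ℝ := Real.sqrt (1 + ‖x‖ ^ 2)

lemma one_le_jap (x : E3) : 1 ≤ jap x := by
  have : (1:ℝ) = Real.sqrt 1 := by simp
  rw [jap, this]
  exact Real.sqrt_le_sqrt (by nlinarith [sq_nonneg ‖x‖])

lemma jap_pos (x : E3) : 0 < jap x := lt_of_lt_of_le one_pos (one_le_jap x)

lemma jap_rpow_le_one (x : E3) {lam : ℝ} (hlam : 0 ≤ lam) : jap x ^ (-lam) ≤ 1 :=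
  Real.rpow_le_one_of_one_le_of_nonpos (one_le_jap x) (by linarith)

lemma jap_sub_le (x y : E3) : jap (x - y) ≤ Real.sqrt 2 * jap x * jap y := by
  have h1 : ‖x - y‖ ≤ ‖x‖ + ‖y‖ := norm_sub_le x y
  have hx : 0 ≤ ‖x‖ := norm_nonneg x
  have hy : 0 ≤ ‖y‖ := norm_nonneg y
  have h2 : 1 + ‖x - y‖ ^ 2 ≤ 2 * ((1 + ‖x‖ ^ 2) * (1 + ‖y‖ ^ 2)) := by
    nlinarith [sq_nonneg (‖x‖ - ‖y‖), sq_nonneg (‖x‖ * ‖y‖ - 1), norm_nonneg (x - y)]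
  calc jap (x - y) ≤ Real.sqrt (2 * ((1 + ‖x‖ ^ 2) * (1 + ‖y‖ ^ 2))) := Real.sqrt_le_sqrt h2
    _ = Real.sqrt 2 * jap x * jap y := by
        rw [Real.sqrt_mul (by norm_num), Real.sqrt_mul (by positivity), jap, jap, mul_assoc]

/-- Lower bound `∫ H(x,v) dv ≥ c_H ⟨x⟩^{-λ}` for the spatially averaged
density `H(x,v) = ∫ κ(x-y) f(y,v) dy`. -/
theorem statement1 (lam κ₁ κ₂ ρ₀ c₂ h₀ : ℝ) (hlam : 0 ≤ lam)
    (hκ₁ : 0 < κ₁) (hκ₂ : 0 < κ₂) (κ : E3 → ℝ) (hκ_meas : Measurable κ)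
    (hκ : ∀ x : E3, κ₁ * jap x ^ (-lam) ≤ κ x ∧ κ x ≤ κ₂ * jap x ^ (-lam))
    (f : E3 × E3 → ℝ) (hf_meas : Measurable f) (hf_nonneg : ∀ p, 0 ≤ f p)
    (hf_int : Integrable f) (hmass : ∫ p, f p = ρ₀) (hρ : 0 < ρ₀)
    (hmom_int : Integrable (fun p : E3 × E3 => (‖p.1‖ ^ 2 + ‖p.2‖ ^ 2) * f p))
    (hmom : ∫ p : E3 × E3, (‖p.1‖ ^ 2 + ‖p.2‖ ^ 2) * f p = c₂)
    (hent_int : Integrable (fun p : E3 × E3 => f p * Real.log (f p)))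
    (hent : ∫ p : E3 × E3, f p * Real.log (f p) ≤ h₀) :
    ∃ cH : ℝ, 0 < cH ∧ ∀ x : E3,
      cH * jap x ^ (-lam) ≤ ∫ v : E3, ∫ y : E3, κ (x - y) * f (y, v) := by
  -- the weighted mass I
  set g : E3 × E3 → ℝ := fun p => jap p.1 ^ (-lam) * f p with hg
  have hg_meas : Measurable g := by
    unfold g
    unfold jap
    fun_prop
  have hg_nonneg : ∀ p, 0 ≤ g p := fun p =>
    mul_nonneg (Real.rpow_nonneg (jap_pos _).le _) (hf_nonneg p)
  have hg_le : ∀ p, g p ≤ f p := fun p =>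
    mul_le_of_le_one_left (hf_nonneg p) (jap_rpow_le_one p.1 hlam)
  have hg_int : Integrable g := by
    refine hf_int.mono (hg_meas.aestronglyMeasurable) (Filter.Eventually.of_forall fun p => ?_)
    rw [Real.norm_of_nonneg (hg_nonneg p), Real.norm_of_nonneg (hf_nonneg p)]
    exact hg_le p
  set I : ℝ := ∫ p, g p with hI
  have hI_pos : 0 < I := by
    rcases (integral_nonneg (f := g) hg_nonneg).lt_or_eq with h | h
    · exact h
    · exfalso
      have hz : g =ᵐ[volume] 0 :=
        (integral_eq_zero_iff_of_nonneg hg_nonneg hg_int).1 h.symm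
      have hfz : f =ᵐ[volume] 0 := by
        filter_upwards [hz] with p hp
        have hjp : (0:ℝ) < jap p.1 ^ (-lam) := Real.rpow_pos_of_pos (jap_pos _) _
        have : jap p.1 ^ (-lam) * f p = 0 := hp
        exact (mul_eq_zero.1 this).resolve_left (ne_of_gt hjp)
      have : ∫ p, f p = 0 := integral_eq_zero_of_ae hfz
      rw [hmass] at this
      linarith
  refine ⟨κ₁ * Real.sqrt 2 ^ (-lam) * I,
    mul_pos (mul_pos hκ₁ (Real.rpow_pos_of_pos (Real.sqrt_pos.2 two_pos) _)) hI_pos,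
    fun x => ?_⟩
  -- the function under the double integral
  set F : E3 × E3 → ℝ := fun p => κ (x - p.1) * f p with hF
  have hF_meas : Measurable F :=
    (hκ_meas.comp (measurable_const.sub measurable_fst)).mul hf_meas
  have hF_int : Integrable F := by
    refine (hf_int.const_mul κ₂).mono hF_meas.aestronglyMeasurable
      (Filter.Eventually.of_forall fun p => ?_)
    have h1 : κ (x - p.1) ≤ κ₂ * jap (x - p.1) ^ (-lam) := (hκ _).2
    have h2 : κ₂ * jap (x - p.1) ^ (-lam) ≤ κ₂ :=
      (mul_le_of_le_one_right hκ₂.le (jap_rpow_le_one _ hlam))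
    have h0 : 0 ≤ κ (x - p.1) :=
      le_trans (mul_nonneg hκ₁.le (Real.rpow_nonneg (jap_pos _).le _)) (hκ (x - p.1)).1
    rw [Real.norm_of_nonneg (mul_nonneg h0 (hf_nonneg p)),
      Real.norm_of_nonneg (mul_nonneg hκ₂.le (hf_nonneg p))]
    exact mul_le_mul (le_trans h1 h2) le_rfl (hf_nonneg p) hκ₂.le
  -- Fubini : the iterated integral equals the product integral
  have hswap : ∫ v : E3, ∫ y : E3, κ (x - y) * f (y, v) = ∫ p, F p := by
    rw [MeasureTheory.Measure.volume_eq_prod] at hF_int ⊢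
    have hswap' : Integrable (fun q : E3 × E3 => F (q.2, q.1))
        ((volume : Measure E3).prod volume) := hF_int.swap
    calc ∫ v : E3, ∫ y : E3, κ (x - y) * f (y, v)
        = ∫ v : E3, ∫ y : E3, F (y, v) := rfl
      _ = ∫ y : E3, ∫ v : E3, F (y, v) := integral_integral_swap hswap'
      _ = ∫ p, F p := integral_integral hF_int
  rw [hswap]
  -- pointwise lower bound and conclude
  have key : ∀ p : E3 × E3,
      κ₁ * Real.sqrt 2 ^ (-lam) * jap x ^ (-lam) * g p ≤ F p := by
    intro p
    have h1 : κ₁ * jap (x - p.1) ^ (-lam) ≤ κ (x - p.1) := (hκ _).1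
    have h2 : jap (x - p.1) ≤ Real.sqrt 2 * jap x * jap p.1 := jap_sub_le x p.1
    have h3 : (Real.sqrt 2 * jap x * jap p.1) ^ (-lam) ≤ jap (x - p.1) ^ (-lam) :=
      Real.rpow_le_rpow_of_nonpos (jap_pos _) h2 (by linarith)
    have h4 : (Real.sqrt 2 * jap x * jap p.1) ^ (-lam)
        = Real.sqrt 2 ^ (-lam) * jap x ^ (-lam) * jap p.1 ^ (-lam) := by
      rw [Real.mul_rpow (mul_nonneg (Real.sqrt_nonneg 2) (jap_pos x).le) (jap_pos _).le,
        Real.mul_rpow (Real.sqrt_nonneg 2) (jap_pos x).le]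
    have h5 : κ₁ * (Real.sqrt 2 ^ (-lam) * jap x ^ (-lam) * jap p.1 ^ (-lam))
        ≤ κ (x - p.1) := by
      rw [← h4]; exact le_trans (by nlinarith) h1
    have hfp := hf_nonneg p
    calc κ₁ * Real.sqrt 2 ^ (-lam) * jap x ^ (-lam) * g p
        = κ₁ * (Real.sqrt 2 ^ (-lam) * jap x ^ (-lam) * jap p.1 ^ (-lam)) * f p := by
          rw [hg]; ring
      _ ≤ κ (x - p.1) * f p := mul_le_mul_of_nonneg_right h5 hfp
      _ = F p := rfl
  have hmono : ∫ p, κ₁ * Real.sqrt 2 ^ (-lam) * jap x ^ (-lam) * g p ≤ ∫ p, F p :=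
    integral_mono (hg_int.const_mul _) hF_int key
  calc κ₁ * Real.sqrt 2 ^ (-lam) * I * jap x ^ (-lam)
      = ∫ p, κ₁ * Real.sqrt 2 ^ (-lam) * jap x ^ (-lam) * g p := by
        rw [integral_const_mul, hI]; ring
    _ ≤ ∫ p, F p := hmono
end
end

section
/- Let λ ≥ 0, m ≥ max{2, λ+2}, and let κ : ℝ³ → ℝ satisfy 0 ≤ κ(x) ≤ κ₂⟨x⟩^{−λ} for all x ∈ ℝ³, with κ₂ > 0. Let f : ℝ³×ℝ³ → [0,∞) be measurable with ∫_{ℝ⁶} (1 + |x|^m + |v|^m) f(x,v) dx dv ≤ K < ∞. Define H(x,v) := ∫_{ℝ³} κ(x−y) f(y,v) dy. Then there exists a constant C_H > 0, depending only on κ₂, λ, m and K, such that ∫_{ℝ³} ⟨v⟩² H(x,v) dv ≤ C_H ⟨x⟩^{−λ} for every x ∈ ℝ³. -/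
open MeasureTheory Real

noncomputable section

lemma jap_le_sqrt_two_mul_jap_sub_mul_jap (x y : E3) :
    jap x ≤ √2 * (jap (x - y) * jap y) := by
  have hxy : ‖x‖ ≤ ‖x - y‖ + ‖y‖ := norm_le_norm_sub_add x y
  rw [jap, jap, jap, ← Real.sqrt_mul (by positivity), ← Real.sqrt_mul (by norm_num)]
  apply Real.sqrt_le_sqrt
  -- `1 + (a + b)² ≤ 2 (1 + a²) (1 + b²)`
  nlinarith [norm_nonneg x, norm_nonneg (x - y), norm_nonneg y,
    sq_nonneg (‖x - y‖ * ‖y‖), sq_nonneg (‖x - y‖ - ‖y‖)]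

lemma jap_rpow_le_two_rpow_mul {lam : ℝ} (hlam : 0 ≤ lam) (x y : E3) :
    jap x ^ lam ≤ 2 ^ (lam / 2) * (jap (x - y) ^ lam * jap y ^ lam) :=
  calc jap x ^ lam ≤ (√2 * (jap (x - y) * jap y)) ^ lam :=
        rpow_le_rpow (jap_pos x).le (jap_le_sqrt_two_mul_jap_sub_mul_jap x y) hlam
    _ = 2 ^ (lam / 2) * (jap (x - y) ^ lam * jap y ^ lam) := by
        rw [mul_rpow (sqrt_nonneg 2) (mul_pos (jap_pos _) (jap_pos _)).le,
          mul_rpow (jap_pos _).le (jap_pos _).le,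
          sqrt_eq_rpow, ← rpow_mul zero_le_two]
        ring_nf

lemma jap_sub_rpow_neg_le {lam : ℝ} (hlam : 0 ≤ lam) (x y : E3) :
    jap (x - y) ^ (-lam) ≤ 2 ^ (lam / 2) * jap y ^ lam * jap x ^ (-lam) := by
  have hxy := rpow_pos_of_pos (jap_pos (x - y)) lam
  rw [rpow_neg (jap_pos _).le, rpow_neg (jap_pos _).le, ← div_eq_mul_inv,
    le_div_iff₀ (rpow_pos_of_pos (jap_pos x) lam), inv_mul_le_iff₀ hxy]
  linarith [jap_rpow_le_two_rpow_mul hlam x y]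

lemma rpow_mul_rpow_le_rpow_add_rpow {a b p q m : ℝ} (ha : 1 ≤ a) (hb : 1 ≤ b)
    (hp : 0 ≤ p) (hq : 0 ≤ q) (hpq : p + q ≤ m) : a ^ p * b ^ q ≤ a ^ m + b ^ m := by
  rcases le_total a b with hab | hba
  · calc a ^ p * b ^ q ≤ b ^ p * b ^ q := by gcongr
      _ = b ^ (p + q) := (rpow_add (by linarith) _ _).symm
      _ ≤ b ^ m := rpow_le_rpow_of_exponent_le hb hpq
      _ ≤ a ^ m + b ^ m := le_add_of_nonneg_left (rpow_nonneg (by linarith) _)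
  · calc a ^ p * b ^ q ≤ a ^ p * a ^ q := by gcongr
      _ = a ^ (p + q) := (rpow_add (by linarith) _ _).symm
      _ ≤ a ^ m := rpow_le_rpow_of_exponent_le ha hpq
      _ ≤ a ^ m + b ^ m := le_add_of_nonneg_right (rpow_nonneg (by linarith) _)

lemma jap_rpow_le_two_rpow_mul_one_add {m : ℝ} (hm : 0 ≤ m) (y : E3) :
    jap y ^ m ≤ 2 ^ m * (1 + ‖y‖ ^ m) := by
  have hjap : jap y ≤ 2 * max 1 ‖y‖ := by
    rw [jap, sqrt_le_left (by positivity)]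
    rcases le_total ‖y‖ 1 with h | h
    · rw [max_eq_left h]; nlinarith [norm_nonneg y]
    · rw [max_eq_right h]; nlinarith
  have hmax : max 1 ‖y‖ ^ m ≤ 1 + ‖y‖ ^ m := by
    rcases le_total ‖y‖ 1 with h | h
    · rw [max_eq_left h, one_rpow]
      exact le_add_of_nonneg_right (rpow_nonneg (norm_nonneg y) m)
    · rw [max_eq_right h]
      exact le_add_of_nonneg_left zero_le_one
  calc jap y ^ m ≤ (2 * max 1 ‖y‖) ^ m := rpow_le_rpow (jap_pos y).le hjap hm
    _ = 2 ^ m * max 1 ‖y‖ ^ m := mul_rpow zero_le_two (by positivity)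
    _ ≤ 2 ^ m * (1 + ‖y‖ ^ m) := by gcongr

lemma jap_rpow_mul_jap_sq_le {lam m : ℝ} (hlam : 0 ≤ lam) (hm : lam + 2 ≤ m) (y v : E3) :
    jap y ^ lam * jap v ^ 2 ≤ 2 ^ (m + 1) * (1 + ‖y‖ ^ m + ‖v‖ ^ m) := by
  have hm0 : 0 ≤ m := by linarith
  calc jap y ^ lam * jap v ^ 2 = jap y ^ lam * jap v ^ (2 : ℝ) := by rw [rpow_two]
    _ ≤ jap y ^ m + jap v ^ m :=
        rpow_mul_rpow_le_rpow_add_rpow (one_le_jap y) (one_le_jap v) hlam zero_le_two hm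
    _ ≤ 2 ^ m * (1 + ‖y‖ ^ m) + 2 ^ m * (1 + ‖v‖ ^ m) :=
        add_le_add (jap_rpow_le_two_rpow_mul_one_add hm0 y)
          (jap_rpow_le_two_rpow_mul_one_add hm0 v)
    _ ≤ 2 ^ (m + 1) * (1 + ‖y‖ ^ m + ‖v‖ ^ m) := by
        rw [rpow_add_one two_ne_zero]
        nlinarith [rpow_pos_of_pos two_pos m, rpow_nonneg (norm_nonneg y) m,
          rpow_nonneg (norm_nonneg v) m]

lemma kernel_mul_jap_sq_le {lam m κ₂ : ℝ} {κ : E3 → ℝ} (hlam : 0 ≤ lam) (hm : lam + 2 ≤ m)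
    (hκ₂ : 0 ≤ κ₂) (hκ : ∀ z, κ z ≤ κ₂ * jap z ^ (-lam)) (x y v : E3) :
    jap v ^ 2 * κ (x - y) ≤
      κ₂ * 2 ^ (lam / 2) * 2 ^ (m + 1) * jap x ^ (-lam) * (1 + ‖y‖ ^ m + ‖v‖ ^ m) := by
  have hx : 0 ≤ jap x ^ (-lam) := rpow_nonneg (jap_pos x).le _
  calc jap v ^ 2 * κ (x - y)
      ≤ jap v ^ 2 * (κ₂ * (2 ^ (lam / 2) * jap y ^ lam * jap x ^ (-lam))) := by
        gcongr
        exact (hκ _).trans (by gcongr; exact jap_sub_rpow_neg_le hlam x y)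
    _ = κ₂ * 2 ^ (lam / 2) * jap x ^ (-lam) * (jap y ^ lam * jap v ^ 2) := by ring
    _ ≤ κ₂ * 2 ^ (lam / 2) * jap x ^ (-lam) * (2 ^ (m + 1) * (1 + ‖y‖ ^ m + ‖v‖ ^ m)) := by
        gcongr κ₂ * 2 ^ (lam / 2) * jap x ^ (-lam) * ?_
        exact jap_rpow_mul_jap_sq_le hlam hm y v
    _ = κ₂ * 2 ^ (lam / 2) * 2 ^ (m + 1) * jap x ^ (-lam) * (1 + ‖y‖ ^ m + ‖v‖ ^ m) := by
        ring

lemma integral_integral_le_integral_prod {α β : Type*} [MeasurableSpace α] [MeasurableSpace β]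
    {μ : Measure α} {ν : Measure β} [SFinite μ] [SFinite ν] {g W : α × β → ℝ}
    (hg : ∀ p, 0 ≤ g p) (hgW : ∀ p, g p ≤ W p) (hW : Integrable W (μ.prod ν)) :
    ∫ b, ∫ a, g (a, b) ∂μ ∂ν ≤ ∫ p, W p ∂(μ.prod ν) := by
  rw [integral_prod_symm W hW]
  refine integral_mono_of_nonneg (ae_of_all _ fun b => integral_nonneg fun a => hg _)
    hW.integral_prod_right ?_
  filter_upwards [hW.prod_left_ae] with b hb
  exact integral_mono_of_nonneg (ae_of_all _ fun a => hg _) hb (ae_of_all _ fun a => hgW _)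

theorem statement3_general (lam m κ₂ K : ℝ) (hlam : 0 ≤ lam) (hm : max 2 (lam + 2) ≤ m)
    (hκ₂ : 0 < κ₂) (κ : E3 → ℝ)
    (hκ : ∀ x : E3, 0 ≤ κ x ∧ κ x ≤ κ₂ * jap x ^ (-lam))
    (f : E3 × E3 → ℝ) (hf_nonneg : ∀ p, 0 ≤ f p)
    (hmom_int : Integrable (fun p : E3 × E3 => (1 + ‖p.1‖ ^ m + ‖p.2‖ ^ m) * f p))
    (hmom : ∫ p : E3 × E3, (1 + ‖p.1‖ ^ m + ‖p.2‖ ^ m) * f p ≤ K) :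
    ∃ CH : ℝ, 0 < CH ∧ ∀ x : E3,
      (∫ v : E3, jap v ^ 2 * ∫ y : E3, κ (x - y) * f (y, v)) ≤ CH * jap x ^ (-lam) := by
  set C₀ := κ₂ * 2 ^ (lam / 2) * 2 ^ (m + 1)
  refine ⟨C₀ * max K 1, by positivity, fun x => ?_⟩
  have hpt (p : E3 × E3) : jap p.2 ^ 2 * (κ (x - p.1) * f p) ≤
      C₀ * jap x ^ (-lam) * ((1 + ‖p.1‖ ^ m + ‖p.2‖ ^ m) * f p) := by
    rw [← mul_assoc, ← mul_assoc]
    exact mul_le_mul_of_nonneg_right (kernel_mul_jap_sq_le hlam (le_of_max_le_right hm)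
      hκ₂.le (fun z => (hκ z).2) x p.1 p.2) (hf_nonneg p)
  calc (∫ v : E3, jap v ^ 2 * ∫ y : E3, κ (x - y) * f (y, v))
      = ∫ v : E3, ∫ y : E3, jap v ^ 2 * (κ (x - y) * f (y, v)) := by
        simp only [integral_const_mul]
    _ ≤ ∫ p : E3 × E3, C₀ * jap x ^ (-lam) * ((1 + ‖p.1‖ ^ m + ‖p.2‖ ^ m) * f p) :=
        integral_integral_le_integral_prod
          (fun p => mul_nonneg (sq_nonneg _) (mul_nonneg (hκ _).1 (hf_nonneg p))) hpt
          (hmom_int.const_mul _)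
    _ = C₀ * jap x ^ (-lam) * ∫ p : E3 × E3, (1 + ‖p.1‖ ^ m + ‖p.2‖ ^ m) * f p :=
        integral_const_mul _ _
    _ ≤ C₀ * jap x ^ (-lam) * max K 1 := by
        have hx : 0 ≤ jap x ^ (-lam) := rpow_nonneg (jap_pos x).le _
        gcongr
        exact hmom.trans (le_max_left _ _)
    _ = C₀ * max K 1 * jap x ^ (-lam) := by ring

/-- Second-moment bound `∫ ⟨v⟩² H(x,v) dv ≤ C_H ⟨x⟩^{-λ}`
for `H(x,v) = ∫ κ(x-y) f(y,v) dy`, given a moment bound of order `m ≥ max{2, λ+2}` on `f`. -/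
theorem statement3 (lam m κ₂ K : ℝ) (hlam : 0 ≤ lam) (hm : max 2 (lam + 2) ≤ m)
    (hκ₂ : 0 < κ₂) (κ : E3 → ℝ) (hκ_meas : Measurable κ)
    (hκ : ∀ x : E3, 0 ≤ κ x ∧ κ x ≤ κ₂ * jap x ^ (-lam))
    (f : E3 × E3 → ℝ) (hf_meas : Measurable f) (hf_nonneg : ∀ p, 0 ≤ f p)
    (hmom_int : Integrable (fun p : E3 × E3 => (1 + ‖p.1‖ ^ m + ‖p.2‖ ^ m) * f p))
    (hmom : ∫ p : E3 × E3, (1 + ‖p.1‖ ^ m + ‖p.2‖ ^ m) * f p ≤ K) :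
    ∃ CH : ℝ, 0 < CH ∧ ∀ x : E3,
      (∫ v : E3, jap v ^ 2 * ∫ y : E3, κ (x - y) * f (y, v)) ≤ CH * jap x ^ (-lam) :=
  statement3_general lam m κ₂ K hlam hm hκ₂ κ hκ f hf_nonneg hmom_int hmom
end
end

section
/- Let R > 0 and μ > 0. Then the infimum, taken over all unit vectors e ∈ ℝ³, all v ∈ ℝ³, and all Lebesgue measurable sets D ⊆ B_R(v) (the Euclidean ball of radius R centered at v in ℝ³) with Lebesgue measure |D| ≥ μ, of the quantity ∫_D (|w|² − (e·w)²) dw, is strictly positive. -/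
open MeasureTheory Real

noncomputable section

lemma box_volume (b : OrthonormalBasis (Fin 3) ℝ E3) (lo hi : Fin 3 → ℝ) :
    volume {w : E3 | ∀ i, b.repr w i ∈ Set.Icc (lo i) (hi i)}
      = ∏ i, ENNReal.ofReal (hi i - lo i) := by
  have h1 : {w : E3 | ∀ i, b.repr w i ∈ Set.Icc (lo i) (hi i)}
      = (⇑(MeasurableEquiv.toLp 2 (Fin 3 → ℝ)).symm ∘ ⇑b.repr) ⁻¹'
          (Set.univ.pi fun i => Set.Icc (lo i) (hi i)) := by
    ext w
    simp only [Set.mem_setOf_eq, Set.mem_preimage, Function.comp_apply, Set.mem_univ_pi]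
    rfl
  rw [h1, ((EuclideanSpace.volume_preserving_symm_measurableEquiv_toLp (Fin 3)).comp
      b.measurePreserving_repr).measure_preimage
      (MeasurableSet.univ_pi fun i => measurableSet_Icc).nullMeasurableSet,
    volume_pi_pi]
  simp [Real.volume_Icc]

lemma onb_with_e (e : E3) (he : ‖e‖ = 1) :
    ∃ b : OrthonormalBasis (Fin 3) ℝ E3, b 0 = e := by
  have card : Module.finrank ℝ E3 = Fintype.card (Fin 3) := by simp
  have hv : Orthonormal ℝ (({0} : Set (Fin 3)).restrict fun _ => e) := by
    constructor
    · intro i; exact he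
    · rintro ⟨i, hi⟩ ⟨j, hj⟩ hij
      simp only [Set.mem_singleton_iff] at hi hj
      exact absurd (Subtype.ext (hi.trans hj.symm)) hij
  obtain ⟨b, hb⟩ := hv.exists_orthonormalBasis_extension_of_card_eq card
  exact ⟨b, hb 0 rfl⟩

/-- The infimum over unit vectors `e`, points `v`, and measurable sets
`D ⊆ B_R(v)` of measure at least `μ`, of `∫_D (|w|² - (e·w)²) dw`, is strictly positive. -/
theorem statement8 (R μ : ℝ) (hR : 0 < R) (hμ : 0 < μ) :
    ∃ c : ℝ, 0 < c ∧ ∀ (e v : E3), ‖e‖ = 1 → ∀ D : Set E3, MeasurableSet D →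
      D ⊆ Metric.ball v R → ENNReal.ofReal μ ≤ volume D →
        c ≤ ∫ w in D, (‖w‖ ^ 2 - (inner ℝ e w : ℝ) ^ 2) := by
  set r2 : ℝ := μ / (32 * R) with hr2def
  have hr2 : 0 < r2 := by positivity
  refine ⟨r2 * (μ / 2), by positivity, ?_⟩
  intro e v he D hD hDball hDμ
  obtain ⟨b, hb⟩ := onb_with_e e he
  set f : E3 → ℝ := fun w => ‖w‖ ^ 2 - (inner ℝ e w : ℝ) ^ 2 with hfdef
  have hfc : Continuous f := by
    apply Continuous.sub (by fun_prop)
    exact (continuous_const.inner continuous_id).pow 2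
  have hfeq : ∀ w, f w = (b.repr w 1) ^ 2 + (b.repr w 2) ^ 2 := by
    intro w
    have hn : ‖w‖ ^ 2 = ∑ i, (b.repr w i) ^ 2 := by
      rw [← real_inner_self_eq_norm_sq, ← b.sum_inner_mul_inner w w]
      refine Finset.sum_congr rfl fun i _ => ?_
      rw [b.repr_apply_apply, sq, real_inner_comm w (b i)]
    have h0 : (inner ℝ e w : ℝ) = b.repr w 0 := by
      rw [← hb, b.repr_apply_apply]
    rw [hfdef]; simp only [hn, h0, Fin.sum_univ_three]; ring
  have hf0 : ∀ w, 0 ≤ f w := fun w => by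
    rw [hfeq w]; positivity
  set r : ℝ := Real.sqrt r2 with hrdef
  have hrsq : r ^ 2 = r2 := Real.sq_sqrt hr2.le
  have hrpos : 0 < r := Real.sqrt_pos.2 hr2
  set G : Set E3 := D ∩ {w | r2 < f w} with hGdef
  have hGm : MeasurableSet G :=
    hD.inter (measurableSet_lt measurable_const hfc.measurable)
  -- the bad set is contained in a box
  have hbox : D ∩ {w | f w ≤ r2} ⊆ {w : E3 | ∀ i,
      b.repr w i ∈ Set.Icc (![b.repr v 0 - R, -r, -r] i) (![b.repr v 0 + R, r, r] i)} := by
    rintro w ⟨hwD, hwf⟩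
    have hwb : ‖w - v‖ ≤ R := le_of_lt (by simpa [dist_eq_norm] using hDball hwD)
    have hcoord : |b.repr w 0 - b.repr v 0| ≤ R := by
      have h1 : |b.repr (w - v) 0| ≤ ‖b.repr (w - v)‖ := by
        rw [← Real.sqrt_sq_eq_abs, EuclideanSpace.norm_eq]
        apply Real.sqrt_le_sqrt
        calc (b.repr (w-v) 0)^2
            ≤ ∑ j, (b.repr (w-v) j)^2 :=
              Finset.single_le_sum (f := fun j => (b.repr (w-v) j)^2)
                (fun j _ => sq_nonneg _) (Finset.mem_univ 0)
          _ = ∑ j, ‖b.repr (w-v) j‖^2 := by simp [sq_abs]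
      have h2 : ‖b.repr (w - v)‖ = ‖w - v‖ := b.repr.norm_map _
      have h3 := h1.trans (h2.le.trans hwb)
      simpa [map_sub] using h3
    have hsum : (b.repr w 1) ^ 2 + (b.repr w 2) ^ 2 ≤ r2 := by
      rw [← hfeq w]; exact hwf
    have hsmall1 : |b.repr w 1| ≤ r := by
      rw [← Real.sqrt_sq_eq_abs, hrdef]
      exact Real.sqrt_le_sqrt (by nlinarith [sq_nonneg (b.repr w 2)])
    have hsmall2 : |b.repr w 2| ≤ r := by
      rw [← Real.sqrt_sq_eq_abs, hrdef]
      exact Real.sqrt_le_sqrt (by nlinarith [sq_nonneg (b.repr w 1)])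
    intro i
    fin_cases i
    · show b.repr w 0 ∈ Set.Icc (b.repr v 0 - R) (b.repr v 0 + R)
      have h := abs_le.1 hcoord
      exact Set.mem_Icc.2 ⟨by linarith [h.1], by linarith [h.2]⟩
    · show b.repr w 1 ∈ Set.Icc (-r) r
      exact Set.mem_Icc.2 (abs_le.1 hsmall1)
    · show b.repr w 2 ∈ Set.Icc (-r) r
      exact Set.mem_Icc.2 (abs_le.1 hsmall2)
  -- volume of the bad set
  have hbadvol : volume (D ∩ {w | f w ≤ r2}) ≤ ENNReal.ofReal (μ / 4) := by
    refine (measure_mono hbox).trans ?_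
    rw [box_volume, Fin.prod_univ_three]
    have e0 : (![b.repr v 0 + R, r, r] 0 : ℝ) - ![b.repr v 0 - R, -r, -r] 0 = 2*R := by
      show b.repr v 0 + R - (b.repr v 0 - R) = 2*R; ring
    have e1 : (![b.repr v 0 + R, r, r] 1 : ℝ) - ![b.repr v 0 - R, -r, -r] 1 = 2*r := by
      show r - -r = 2*r; ring
    have e2 : (![b.repr v 0 + R, r, r] 2 : ℝ) - ![b.repr v 0 - R, -r, -r] 2 = 2*r := by
      show r - -r = 2*r; ring
    rw [e0, e1, e2, ← ENNReal.ofReal_mul (by positivity),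
      ← ENNReal.ofReal_mul (by positivity)]
    refine le_of_eq (congrArg _ ?_)
    have h : r * r = μ / (32*R) := by rw [← hr2def, ← hrsq]; ring
    calc 2*R*(2*r)*(2*r) = 8*R*(r*r) := by ring
      _ = 8*R*(μ/(32*R)) := by rw [h]
      _ = μ/4 := by field_simp; ring
  have hGfin : volume G ≠ ⊤ := by
    refine ne_top_of_le_ne_top ?_ (measure_mono (Set.inter_subset_left.trans hDball))
    exact (measure_ball_lt_top).ne
  have hGvol : ENNReal.ofReal (μ / 2) ≤ volume G := by
    by_contra hcon
    push_neg at hcon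
    have hsplit : D ⊆ G ∪ (D ∩ {w | f w ≤ r2}) := by
      intro w hw
      rcases le_or_gt (f w) r2 with h | h
      · exact Or.inr ⟨hw, h⟩
      · exact Or.inl ⟨hw, h⟩
    have h1 : ENNReal.ofReal μ ≤ volume G + ENNReal.ofReal (μ / 4) :=
      hDμ.trans ((measure_mono hsplit).trans ((measure_union_le _ _).trans
        (add_le_add_right hbadvol _)))
    have h2 : volume G + ENNReal.ofReal (μ / 4)
        < ENNReal.ofReal (μ / 2) + ENNReal.ofReal (μ / 4) :=
      ENNReal.add_lt_add_right ENNReal.ofReal_ne_top hcon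
    rw [← ENNReal.ofReal_add (by positivity) (by positivity)] at h2
    have h3 : ENNReal.ofReal (μ/2 + μ/4) < ENNReal.ofReal μ :=
      (ENNReal.ofReal_lt_ofReal_iff hμ).2 (by linarith)
    exact absurd (h1.trans_lt (h2.trans h3)) (lt_irrefl _)
  have hint : IntegrableOn f D volume := by
    have : IntegrableOn f (Metric.closedBall v R) volume :=
      hfc.continuousOn.integrableOn_compact (isCompact_closedBall v R)
    exact this.mono_set (hDball.trans Metric.ball_subset_closedBall)
  have step1 : r2 * (μ / 2) ≤ r2 * (volume G).toReal := by
    apply mul_le_mul_of_nonneg_left _ hr2.le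
    calc μ / 2 = (ENNReal.ofReal (μ/2)).toReal := by
          rw [ENNReal.toReal_ofReal (by positivity)]
      _ ≤ (volume G).toReal := ENNReal.toReal_mono hGfin hGvol
  have step2 : r2 * (volume G).toReal ≤ ∫ w in G, f w := by
    have := setIntegral_ge_of_const_le hGm hGfin
      (fun w hw => le_of_lt hw.2) (hint.mono_set Set.inter_subset_left)
    rwa [smul_eq_mul, mul_comm, measureReal_def] at this
  have step3 : ∫ w in G, f w ≤ ∫ w in D, f w :=
    setIntegral_mono_set hint (Filter.Eventually.of_forall hf0)
      (HasSubset.Subset.eventuallyLE Set.inter_subset_left)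
  exact (step1.trans step2).trans step3
end
end

section
/- Let γ ∈ [−3,1], m ≥ 2 a real number, and define N(w) := |w|^{γ+2} (Id − w⊗w/|w|²) for w ∈ ℝ³∖{0}. Then for all v, w ∈ ℝ³ with v ≠ w, v ≠ 0 and w ≠ 0, the divergence in v of the vector field v ↦ N(v−w)(|v|^{m−2} v − |w|^{m−2} w) satisfies Div_v ( N(v−w)(|v|^{m−2} v − |w|^{m−2} w) ) ≤ 2(m−1) |v|^{m−2} |v−w|^{γ+2}. -/
open MeasureTheory Real

noncomputable section

/-- The Landau kernel `N(w) = |w|^{γ+2} (Id - w⊗w/|w|²)` for `w ≠ 0`. -/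
def Nker (γ : ℝ) (w : E3) : Matrix (Fin 3) (Fin 3) ℝ :=
  Matrix.of fun i j => ‖w‖ ^ (γ + 2) * ((if i = j then (1 : ℝ) else 0) - w i * w j / ‖w‖ ^ 2)

lemma rpow_sq_helper (a : ℝ) (h : 0 ≤ a) (q : ℝ) : ((a ^ 2 : ℝ)) ^ q = a ^ (2 * q) := by
  rw [← Real.rpow_natCast a 2, ← Real.rpow_mul h]; norm_num

lemma hasF_norm_rpow (p : ℝ) (x : E3) (hx : x ≠ 0) :
    HasFDerivAt (fun u : E3 => ‖u‖ ^ p)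
      ((p * ‖x‖ ^ (p - 2)) • (innerSL ℝ x : E3 →L[ℝ] ℝ)) x := by
  have h0 : (fun u : E3 => ‖u‖ ^ p) = fun u : E3 => (inner ℝ u u) ^ (p / 2) := by
    funext u
    rw [real_inner_self_eq_norm_sq, rpow_sq_helper _ (norm_nonneg _)]
    congr 1; ring
  have hx2 : (inner ℝ x x) ≠ 0 := by
    rw [real_inner_self_eq_norm_sq]
    exact pow_ne_zero 2 (norm_ne_zero_iff.2 hx)
  have h1 := (((hasFDerivAt_id x).inner ℝ (hasFDerivAt_id x)).rpow_const
    (p := p / 2) (Or.inl hx2))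
  rw [h0]
  refine HasFDerivAt.congr_fderiv h1 (Eq.symm ?_)
  ext h
  simp only [ContinuousLinearMap.smul_apply, innerSL_apply_apply, fderivInnerCLM_apply,
    ContinuousLinearMap.comp_apply, ContinuousLinearMap.prod_apply,
    ContinuousLinearMap.id_apply, smul_eq_mul, id_eq]
  rw [real_inner_self_eq_norm_sq, rpow_sq_helper _ (norm_nonneg _), real_inner_comm h x]
  have h2 : (2 : ℝ) * (p / 2 - 1) = p - 2 := by ring
  rw [h2]; ring

lemma hasF_norm_sub_rpow (p : ℝ) (w x : E3) (hx : x ≠ w) :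
    HasFDerivAt (fun u : E3 => ‖u - w‖ ^ p)
      ((p * ‖x - w‖ ^ (p - 2)) • (innerSL ℝ (x - w) : E3 →L[ℝ] ℝ)) x := by
  have h := (hasF_norm_rpow p (x - w) (sub_ne_zero.2 hx)).comp x
    ((hasFDerivAt_id x).sub_const w)
  exact h.congr_fderiv (by ext y; simp)

lemma hasF_normsq_sub (w x : E3) :
    HasFDerivAt (fun u : E3 => ‖u - w‖ ^ 2)
      ((2 : ℝ) • (innerSL ℝ (x - w) : E3 →L[ℝ] ℝ)) x := by
  have h0 : (fun u : E3 => ‖u - w‖ ^ 2) = fun u : E3 => (inner ℝ (u - w) (u - w)) := by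
    funext u; rw [real_inner_self_eq_norm_sq]
  have h1 := ((hasFDerivAt_id x).sub_const w).inner ℝ ((hasFDerivAt_id x).sub_const w)
  rw [h0]
  refine HasFDerivAt.congr_fderiv h1 (Eq.symm ?_)
  ext h
  simp only [ContinuousLinearMap.smul_apply, innerSL_apply_apply, fderivInnerCLM_apply,
    ContinuousLinearMap.comp_apply, ContinuousLinearMap.prod_apply,
    ContinuousLinearMap.id_apply, smul_eq_mul, id_eq]
  rw [real_inner_comm h (x - w)]; ring

lemma myDiv {f g : E3 → ℝ} {f' g' : E3 →L[ℝ] ℝ} {x : E3} (hf : HasFDerivAt f f' x)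
    (hg : HasFDerivAt g g' x) (h : g x ≠ 0) :
    HasFDerivAt (fun y => f y / g y) ((g x)⁻¹ • f' - (f x / (g x) ^ 2) • g') x := by
  have hi := (hasFDerivAt_inv' (𝕜 := ℝ) h).comp x hg
  have hmul := hf.mul hi
  have h0 : (fun y => f y / g y) = fun y => f y * (Inv.inv ∘ g) y := by
    funext y; simp [div_eq_mul_inv, Function.comp]
  rw [h0]
  refine HasFDerivAt.congr_fderiv hmul (Eq.symm ?_)
  ext e
  simp only [ContinuousLinearMap.smul_apply, ContinuousLinearMap.sub_apply,
    ContinuousLinearMap.add_apply, ContinuousLinearMap.comp_apply,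
    ContinuousLinearMap.neg_apply, ContinuousLinearMap.mulLeftRight_apply,
    smul_eq_mul, Function.comp]
  field_simp
  ring



set_option maxHeartbeats 3000000 in
/-- For `γ ∈ [-3,1]`, `m ≥ 2`, `v ≠ w`, `v ≠ 0`, `w ≠ 0`:
`Div_v ( N(v-w)(|v|^{m-2} v - |w|^{m-2} w) ) ≤ 2(m-1) |v|^{m-2} |v-w|^{γ+2}`. -/
theorem statement11 (γ m : ℝ) (hγ : γ ∈ Set.Icc (-3 : ℝ) 1) (hm : 2 ≤ m)
    (v w : E3) (hvw : v ≠ w) (hv : v ≠ 0) (hw : w ≠ 0) :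
    ∑ i : Fin 3,
        fderiv ℝ (fun u : E3 => ∑ j : Fin 3,
            Nker γ (u - w) i j * (‖u‖ ^ (m - 2) * u j - ‖w‖ ^ (m - 2) * w j))
          v (EuclideanSpace.single i 1) ≤
      2 * (m - 1) * ‖v‖ ^ (m - 2) * ‖v - w‖ ^ (γ + 2) := by
  have hz : v - w ≠ 0 := sub_ne_zero.2 hvw
  have hzpos : (0:ℝ) < ‖v - w‖ := norm_pos_iff.2 hz
  have hvpos : (0:ℝ) < ‖v‖ := norm_pos_iff.2 hv
  have hwpos : (0:ℝ) < ‖w‖ := norm_pos_iff.2 hw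
  have hzsq : ‖v - w‖ ^ 2 ≠ 0 := pow_ne_zero 2 (ne_of_gt hzpos)
  have hcs : ∀ j : Fin 3, HasFDerivAt (fun u : E3 => (u - w) j)
      (EuclideanSpace.proj j : E3 →L[ℝ] ℝ) v := fun j =>
    ((EuclideanSpace.proj (𝕜 := ℝ) j : E3 →L[ℝ] ℝ).hasFDerivAt).sub_const (w j)
  have hc : ∀ j : Fin 3, HasFDerivAt (fun u : E3 => u j)
      (EuclideanSpace.proj j : E3 →L[ℝ] ℝ) v := fun j =>
    (EuclideanSpace.proj (𝕜 := ℝ) j : E3 →L[ℝ] ℝ).hasFDerivAt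
  have hD := fun (i : Fin 3) => HasFDerivAt.fun_sum (u := (Finset.univ : Finset (Fin 3))) (fun j _ =>
    (((hasF_norm_sub_rpow (γ + 2) w v hvw).fun_mul
        ((hasFDerivAt_const (if i = j then (1:ℝ) else 0) v).fun_sub
          (myDiv ((hcs i).fun_mul (hcs j)) (hasF_normsq_sub w v) hzsq))).fun_mul
      (((hasF_norm_rpow (m - 2) v hv).fun_mul (hc j)).sub_const (‖w‖ ^ (m - 2) * w j))))
  simp only [show ∀ i : Fin 3, (fun u : E3 => ∑ j : Fin 3,
        Nker γ (u - w) i j * (‖u‖ ^ (m - 2) * u j - ‖w‖ ^ (m - 2) * w j))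
      = (fun u : E3 => ∑ j : Fin 3,
        ‖u - w‖ ^ (γ + 2) * ((if i = j then (1:ℝ) else 0) - (u - w) i * (u - w) j / ‖u - w‖ ^ 2)
          * (‖u‖ ^ (m - 2) * u j - ‖w‖ ^ (m - 2) * w j)) from fun i => rfl]
  rw [Fin.sum_univ_three, (hD 0).fderiv, (hD 1).fderiv, (hD 2).fderiv]
  simp only [ContinuousLinearMap.sum_apply, ContinuousLinearMap.add_apply,
    ContinuousLinearMap.sub_apply, ContinuousLinearMap.smul_apply,
    ContinuousLinearMap.coe_smul', Pi.smul_apply, innerSL_apply_apply, smul_eq_mul,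
    EuclideanSpace.inner_single_right, RCLike.inner_apply, starRingEnd_apply, star_trivial,
    PiLp.proj_apply, EuclideanSpace.single_apply, ContinuousLinearMap.zero_apply, ContinuousLinearMap.neg_apply,
    Fin.sum_univ_three, Fin.reduceEq, reduceIte, if_true, mul_one, one_mul, mul_zero,
    zero_mul, add_zero, zero_add, sub_zero, zero_sub]
  -- abbreviations
  have coord : ∀ x : E3, ‖x‖ ^ 2 = x 0 * x 0 + x 1 * x 1 + x 2 * x 2 := by
    intro x
    rw [← real_inner_self_eq_norm_sq]
    simp only [PiLp.inner_apply, RCLike.inner_apply, conj_trivial, Fin.sum_univ_three]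
  have e2 : ‖v - w‖ ^ (γ + 2) = ‖v - w‖ ^ (γ + 2 - 2) * ‖v - w‖ ^ 2 := by
    rw [← Real.rpow_natCast ‖v - w‖ 2, ← Real.rpow_add hzpos]
    norm_num
  have hzzF : ‖v - w‖ ^ 2 = (v - w) 0 * (v - w) 0 + (v - w) 1 * (v - w) 1
      + (v - w) 2 * (v - w) 2 := coord (v - w)
  have hZne : (v - w) 0 * (v - w) 0 + (v - w) 1 * (v - w) 1 + (v - w) 2 * (v - w) 2 ≠ 0 := by
    rw [← hzzF]; exact hzsq
  rw [e2, hzzF]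
  clear hD hcs hc
  trans ((m - 2) * (‖v‖ ^ (m - 2 - 2) * (‖v - w‖ ^ (γ + 2 - 2) * (((v - w) 0 * (v - w) 0 + (v - w) 1 * (v - w) 1 + (v - w) 2 * (v - w) 2) * (v 0 * v 0 + v 1 * v 1 + v 2 * v 2) - ((v - w) 0 * v 0 + (v - w) 1 * v 1 + (v - w) 2 * v 2) ^ 2))) + 2 * (‖v‖ ^ (m - 2) * (‖v - w‖ ^ (γ + 2 - 2) * ((v - w) 0 * (v - w) 0 + (v - w) 1 * (v - w) 1 + (v - w) 2 * (v - w) 2))) - 2 * (‖v - w‖ ^ (γ + 2 - 2) * ((v - w) 0 * (‖v‖ ^ (m - 2) * v 0 - ‖w‖ ^ (m - 2) * w 0) + (v - w) 1 * (‖v‖ ^ (m - 2) * v 1 - ‖w‖ ^ (m - 2) * w 1) + (v - w) 2 * (‖v‖ ^ (m - 2) * v 2 - ‖w‖ ^ (m - 2) * w 2))))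
  · apply le_of_eq
    generalize hp0 : ‖v - w‖ ^ (γ + 2 - 2) = G
    generalize hp1 : ‖v‖ ^ (m - 2) = R
    generalize hp2 : ‖v‖ ^ (m - 2 - 2) = R4
    generalize hp3 : ‖w‖ ^ (m - 2) = S
    generalize hq0 : (v - w) 0 = z0
    generalize hq1 : (v - w) 1 = z1
    generalize hq2 : (v - w) 2 = z2
    generalize ha0 : v 0 = a0
    generalize ha1 : v 1 = a1
    generalize ha2 : v 2 = a2
    generalize hb0 : w 0 = b0
    generalize hb1 : w 1 = b1
    generalize hb2 : w 2 = b2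
    rw [hq0, hq1, hq2] at hZne
    have hZne' : z0 ^ 2 + z1 ^ 2 + z2 ^ 2 ≠ 0 := by rwa [sq, sq, sq]
    field_simp
    ring
  · have hG : (0:ℝ) ≤ ‖v - w‖ ^ (γ + 2 - 2) := Real.rpow_nonneg (norm_nonneg _) _
    have hR : (0:ℝ) ≤ ‖v‖ ^ (m - 2) := Real.rpow_nonneg (norm_nonneg _) _
    have hR4 : (0:ℝ) ≤ ‖v‖ ^ (m - 2 - 2) := Real.rpow_nonneg (norm_nonneg _) _
    have hS : (0:ℝ) ≤ ‖w‖ ^ (m - 2) := Real.rpow_nonneg (norm_nonneg _) _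
    have hm2 : (0:ℝ) ≤ m - 2 := by linarith
    have hrr : ‖v‖ ^ 2 = (v 0 * v 0 + v 1 * v 1 + v 2 * v 2) := coord v
    have hss : ‖w‖ ^ 2 = (w 0 * w 0 + w 1 * w 1 + w 2 * w 2) := coord w
    have hZnn : (0:ℝ) ≤ ((v - w) 0 * (v - w) 0 + (v - w) 1 * (v - w) 1 + (v - w) 2 * (v - w) 2) :=
      add_nonneg (add_nonneg (mul_self_nonneg _) (mul_self_nonneg _)) (mul_self_nonneg _)
    have hRR : ‖v‖ ^ (m - 2 - 2) * (v 0 * v 0 + v 1 * v 1 + v 2 * v 2) = ‖v‖ ^ (m - 2) := by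
      rw [← hrr, ← Real.rpow_natCast ‖v‖ 2, ← Real.rpow_add hvpos]
      norm_num
    have hCS : ((v - w) 0 * v 0 + (v - w) 1 * v 1 + (v - w) 2 * v 2) ^ 2 ≤ ((v - w) 0 * (v - w) 0 + (v - w) 1 * (v - w) 1 + (v - w) 2 * (v - w) 2) * (v 0 * v 0 + v 1 * v 1 + v 2 * v 2) := by
      nlinarith [sq_nonneg ((v - w) 0 * v 1 - (v - w) 1 * v 0), sq_nonneg ((v - w) 0 * v 2 - (v - w) 2 * v 0),
        sq_nonneg ((v - w) 1 * v 2 - (v - w) 2 * v 1)]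
    have hsub : ∀ k : Fin 3, (v - w) k = v k - w k := fun k => rfl
    have hvwle : (v 0 * w 0 + v 1 * w 1 + v 2 * w 2) ≤ ‖v‖ * ‖w‖ := by
      have h := real_inner_le_norm v w
      simpa [PiLp.inner_apply, RCLike.inner_apply, Fin.sum_univ_three, mul_comm] using h
    have hmono : (0:ℝ) ≤ (‖v‖ ^ (m - 1) - ‖w‖ ^ (m - 1)) * (‖v‖ - ‖w‖) := by
      rcases le_total ‖v‖ ‖w‖ with h | h
      · have h1 : ‖v‖ ^ (m - 1) ≤ ‖w‖ ^ (m - 1) :=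
          Real.rpow_le_rpow (norm_nonneg v) h (by linarith)
        nlinarith
      · have h1 : ‖w‖ ^ (m - 1) ≤ ‖v‖ ^ (m - 1) :=
          Real.rpow_le_rpow (norm_nonneg w) h (by linarith)
        nlinarith
    have hr1 : ‖v‖ ^ (m - 2) * ‖v‖ = ‖v‖ ^ (m - 1) := by
      rw [show ‖v‖ ^ (m - 1) = ‖v‖ ^ (m - 2) * ‖v‖ ^ (1:ℝ) from by
        rw [← Real.rpow_add hvpos]; congr 1; ring, Real.rpow_one]
    have hs1 : ‖w‖ ^ (m - 2) * ‖w‖ = ‖w‖ ^ (m - 1) := by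
      rw [show ‖w‖ ^ (m - 1) = ‖w‖ ^ (m - 2) * ‖w‖ ^ (1:ℝ) from by
        rw [← Real.rpow_add hwpos]; congr 1; ring, Real.rpow_one]
    have hfirst : (0:ℝ) ≤ ‖v‖ ^ (m - 2) * ‖v‖ * ‖v‖ - ‖v‖ ^ (m - 2) * ‖v‖ * ‖w‖ - ‖w‖ ^ (m - 2) * ‖w‖ * ‖v‖
        + ‖w‖ ^ (m - 2) * ‖w‖ * ‖w‖ := by
      have hb : ‖v‖ ^ (m - 2) * ‖v‖ * ‖v‖ - ‖v‖ ^ (m - 2) * ‖v‖ * ‖w‖ - ‖w‖ ^ (m - 2) * ‖w‖ * ‖v‖ + ‖w‖ ^ (m - 2) * ‖w‖ * ‖w‖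
          = (‖v‖ ^ (m - 1) - ‖w‖ ^ (m - 1)) * (‖v‖ - ‖w‖) := by
        rw [← hr1, ← hs1]; ring
      rw [hb]; exact hmono
    have hzF : (0:ℝ) ≤ ((v - w) 0 * (‖v‖ ^ (m - 2) * v 0 - ‖w‖ ^ (m - 2) * w 0) + (v - w) 1 * (‖v‖ ^ (m - 2) * v 1 - ‖w‖ ^ (m - 2) * w 1) + (v - w) 2 * (‖v‖ ^ (m - 2) * v 2 - ‖w‖ ^ (m - 2) * w 2)) := by
      simp only [hsub]
      nlinarith [hfirst, mul_nonneg (add_nonneg hR hS) (sub_nonneg.2 hvwle), hrr, hss,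
        sq_nonneg ‖v‖, sq_nonneg ‖w‖]
    have key1 : (m - 2) * (‖v‖ ^ (m - 2 - 2) * (‖v - w‖ ^ (γ + 2 - 2) * (((v - w) 0 * (v - w) 0 + (v - w) 1 * (v - w) 1 + (v - w) 2 * (v - w) 2) * (v 0 * v 0 + v 1 * v 1 + v 2 * v 2) - ((v - w) 0 * v 0 + (v - w) 1 * v 1 + (v - w) 2 * v 2) ^ 2)))
        ≤ (m - 2) * (‖v‖ ^ (m - 2 - 2) * (‖v - w‖ ^ (γ + 2 - 2) * (((v - w) 0 * (v - w) 0 + (v - w) 1 * (v - w) 1 + (v - w) 2 * (v - w) 2) * (v 0 * v 0 + v 1 * v 1 + v 2 * v 2)))) := by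
      have h0 : (0:ℝ) ≤ (m - 2) * (‖v‖ ^ (m - 2 - 2) * ‖v - w‖ ^ (γ + 2 - 2)) :=
        mul_nonneg hm2 (mul_nonneg hR4 hG)
      nlinarith [mul_nonneg h0 (sub_nonneg.2 hCS)]
    have key2 : (m - 2) * (‖v‖ ^ (m - 2 - 2) * (‖v - w‖ ^ (γ + 2 - 2) * (((v - w) 0 * (v - w) 0 + (v - w) 1 * (v - w) 1 + (v - w) 2 * (v - w) 2) * (v 0 * v 0 + v 1 * v 1 + v 2 * v 2))))
        = (m - 2) * (‖v‖ ^ (m - 2) * (‖v - w‖ ^ (γ + 2 - 2) * ((v - w) 0 * (v - w) 0 + (v - w) 1 * (v - w) 1 + (v - w) 2 * (v - w) 2))) := by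
      rw [← hRR]; ring
    have key3 : (0:ℝ) ≤ ‖v - w‖ ^ (γ + 2 - 2) * ((v - w) 0 * (‖v‖ ^ (m - 2) * v 0 - ‖w‖ ^ (m - 2) * w 0) + (v - w) 1 * (‖v‖ ^ (m - 2) * v 1 - ‖w‖ ^ (m - 2) * w 1) + (v - w) 2 * (‖v‖ ^ (m - 2) * v 2 - ‖w‖ ^ (m - 2) * w 2)) := mul_nonneg hG hzF
    have key4 : (0:ℝ) ≤ (m - 2) * (‖v‖ ^ (m - 2) * (‖v - w‖ ^ (γ + 2 - 2) * ((v - w) 0 * (v - w) 0 + (v - w) 1 * (v - w) 1 + (v - w) 2 * (v - w) 2))) :=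
      mul_nonneg hm2 (mul_nonneg hR (mul_nonneg hG hZnn))
    linarith [key1, key2, key3, key4]
end
end
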